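/- arXiv:1602.07652 — 2 statements merged into one kernel-verified Lean document; each statement's English description precedes it below -/
import Mathlib

section
/- Let C be a block tridiagonal N×N matrix with block structure C = tridiag(C_{j,j-1}, C_{j,j}, C_{j,j+1}) for j = 1,...,n_z, and let v solve Cv = g. Fix a contiguous block range (a layer) {j : a ≤ j ≤ b}, and let C^ℓ be any matrix coinciding with C on all rows indexed within the layer interior. Then the local solution w of C^ℓ w = χ_layer g - δ_b C_{b,b+1} v_{b+1} + δ_{b+1} C_{b+1,b} v_b - δ_a C_{a,a-1} v_{a-1} + δ_{a-1} C_{a-1,a} v_a coincides with v on the layer, i.e., w_j = v_j for a ≤ j ≤ b, provided C^ℓ restricted to the layer with these boundary corrections is uniquely solvable. (Discrete Green's representation formula for block tridiagonal systems.) -/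
/-!
The restriction `χ v` of the global solution to the layer already solves the local system.
Inside the layer `Cˡ = C`, and `Cˡ (χ v)` differs from `C v = g` only by the couplings
`C_{a,a-1} v_{a-1}` and `C_{b,b+1} v_{b+1}` to the two ghost blocks; outside the layer,
tridiagonality leaves only the ghost rows `a - 1` and `b + 1`, each coupled to a single layer
block. Unique solvability of the local system then forces `w = χ v`.
-/
open scoped Matrix

def IsTridiagonal {β : Type*} [Zero β] {n : ℕ} (F : Fin n → Fin n → β) : Prop :=
  ∀ j k : Fin n, 1 < ((j : ℤ) - (k : ℤ)).natAbs → F j k = 0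

section Tridiagonal

variable {n : ℕ}

theorem IsTridiagonal.mulVec {R m : Type*} [NonUnitalNonAssocSemiring R] [Fintype m]
    {M : Fin n → Fin n → Matrix m m R} (hM : IsTridiagonal M) (u : Fin n → m → R) :
    IsTridiagonal fun j k => M j k *ᵥ u k := fun j k hjk => by
  simp only [hM j k hjk, Matrix.zero_mulVec]

variable {β : Type*} [AddCommMonoid β] {F : Fin n → Fin n → β} {a b a' b' j : Fin n}

theorem IsTridiagonal.sum_compl_Icc (hF : IsTridiagonal F) (ha' : (a' : ℕ) + 1 = a)
    (hb' : (b' : ℕ) = b + 1) (hj : j ∈ Finset.Icc a b) :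
    ∑ k ∈ (Finset.Icc a b)ᶜ, F j k
      = (if j = a then F a a' else 0) + (if j = b then F b b' else 0) := by
  simp only [Finset.mem_Icc, Fin.le_iff_val_le_val] at hj
  have hne : a' ≠ b' := Fin.ne_of_val_ne (by omega)
  rw [← Finset.sum_subset (s₁ := {a', b'}), Finset.sum_pair hne]
  · congr 1 <;> split_ifs with h
    all_goals first | (subst h; rfl) | exact hF _ _ (by rw [Fin.ext_iff] at h; omega)
  · intro k hk
    simp only [Finset.mem_insert, Finset.mem_singleton, Fin.ext_iff] at hk
    simp only [Finset.mem_compl, Finset.mem_Icc, Fin.le_iff_val_le_val]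
    omega
  · intro k hk hk'
    simp only [Finset.mem_compl, Finset.mem_Icc, Fin.le_iff_val_le_val] at hk
    simp only [Finset.mem_insert, Finset.mem_singleton, Fin.ext_iff] at hk'
    exact hF _ _ (by omega)

theorem IsTridiagonal.sum_Icc_of_notMem (hF : IsTridiagonal F) (ha' : (a' : ℕ) + 1 = a)
    (hb' : (b' : ℕ) = b + 1) (hab : a ≤ b) (hj : j ∉ Finset.Icc a b) :
    ∑ k ∈ Finset.Icc a b, F j k
      = (if j = a' then F a' a else 0) + (if j = b' then F b' b else 0) := by
  simp only [Finset.mem_Icc, Fin.le_iff_val_le_val] at hj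
  by_cases hja : j = a'
  · subst hja
    rw [if_pos rfl, if_neg (Fin.ne_of_val_ne (by omega)), add_zero]
    refine Finset.sum_eq_single_of_mem a (Finset.mem_Icc.2 ⟨le_rfl, hab⟩)
      fun k hk hka => hF _ _ ?_
    simp only [Finset.mem_Icc, Fin.le_iff_val_le_val] at hk
    rw [ne_eq, Fin.ext_iff] at hka
    omega
  by_cases hjb : j = b'
  · subst hjb
    rw [if_neg hja, if_pos rfl, zero_add]
    refine Finset.sum_eq_single_of_mem b (Finset.mem_Icc.2 ⟨hab, le_rfl⟩)
      fun k hk hkb => hF _ _ ?_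
    simp only [Finset.mem_Icc, Fin.le_iff_val_le_val] at hk
    rw [ne_eq, Fin.ext_iff] at hkb
    omega
  rw [if_neg hja, if_neg hjb, add_zero]
  refine Finset.sum_eq_zero fun k hk => hF _ _ ?_
  simp only [Finset.mem_Icc, Fin.le_iff_val_le_val] at hk
  rw [Fin.ext_iff] at hja hjb
  omega

end Tridiagonal

theorem Matrix.sum_mulVec_indicator {ι R m : Type*} [Fintype ι] [NonUnitalNonAssocSemiring R]
    [Fintype m] (s : Finset ι) (M : ι → Matrix m m R) (u : ι → m → R) :
    ∑ k, M k *ᵥ (s : Set ι).indicator u k = ∑ k ∈ s, M k *ᵥ u k := by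
  rw [← Finset.sum_indicator_subset _ (Finset.subset_univ s)]
  refine Finset.sum_congr rfl fun k _ => ?_
  by_cases hk : k ∈ s <;> simp [hk]

theorem layer_restriction_solves_local_system {R m : Type*} [Ring R] [Fintype m] {n : ℕ}
    {C Cl : Fin n → Fin n → Matrix m m R} (hC : IsTridiagonal C) (hCl : IsTridiagonal Cl)
    {v g : Fin n → m → R} (hv : ∀ j, ∑ k, C j k *ᵥ v k = g j) {a b a' b' : Fin n}
    (ha' : (a' : ℕ) + 1 = a) (hb' : (b' : ℕ) = b + 1) (hab : a ≤ b)
    (hcompat : ∀ j, a ≤ j → j ≤ b → ∀ k, Cl j k = C j k) (j : Fin n) :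
    ∑ k, Cl j k *ᵥ (Set.Icc a b).indicator v k
      = (if j ∈ Finset.Icc a b then g j else 0)
        + (if j = b then -(Cl b b' *ᵥ v b') else 0)
        + (if j = b' then Cl b' b *ᵥ v b else 0)
        + (if j = a then -(Cl a a' *ᵥ v a') else 0)
        + (if j = a' then Cl a' a *ᵥ v a else 0) := by
  rw [← Finset.coe_Icc, Matrix.sum_mulVec_indicator]
  by_cases hj : j ∈ Finset.Icc a b
  · obtain ⟨hja, hjb⟩ := Finset.mem_Icc.1 hj
    have hjb' : j ≠ b' := (hjb.trans_lt (Fin.lt_def.2 (by omega))).ne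
    have hja' : j ≠ a' := ((Fin.lt_def.2 (by omega)).trans_le hja).ne'
    rw [funext (hcompat j hja hjb), ← hv j, ← Finset.sum_add_sum_compl (Finset.Icc a b),
      (hC.mulVec v).sum_compl_Icc ha' hb' hj, hcompat a le_rfl hab, hcompat b hab le_rfl,
      if_pos hj, if_neg hjb', if_neg hja']
    split_ifs <;> abel
  · rw [(hCl.mulVec v).sum_Icc_of_notMem ha' hb' hab hj, if_neg hj,
      if_neg (ne_of_mem_of_not_mem (Finset.mem_Icc.2 ⟨hab, le_rfl⟩) hj).symm,
      if_neg (ne_of_mem_of_not_mem (Finset.mem_Icc.2 ⟨le_rfl, hab⟩) hj).symm]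
    abel

/-- discrete Green's representation formula for block tridiagonal systems:
let `C` be block tridiagonal with `C v = g`, fix a layer `a ≤ j ≤ b`, and let `Cˡ` be any
block tridiagonal matrix coinciding with `C` on all rows of the layer.  If `w` solves the
local system with right-hand side
`χ_layer g - δ_b Cˡ_{b,b+1} v_{b+1} + δ_{b+1} Cˡ_{b+1,b} v_b - δ_a Cˡ_{a,a-1} v_{a-1}
 + δ_{a-1} Cˡ_{a-1,a} v_a`,
and `Cˡ` is uniquely solvable (injective), then `w` coincides with `v` on the layer. -/
theorem discrete_greens_representation_formula
    (nx nz : ℕ)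
    (C Cl : Fin nz → Fin nz → Matrix (Fin nx) (Fin nx) ℂ)
    (htriC : ∀ j k : Fin nz, 1 < ((j : ℤ) - (k : ℤ)).natAbs → C j k = 0)
    (htriCl : ∀ j k : Fin nz, 1 < ((j : ℤ) - (k : ℤ)).natAbs → Cl j k = 0)
    (v g : Fin nz → Fin nx → ℂ)
    (hv : ∀ j, ∑ k, C j k *ᵥ v k = g j)
    (a b : Fin nz) (ha : 0 < (a : ℕ)) (hb : (b : ℕ) + 1 < nz) (hab : (a : ℕ) ≤ (b : ℕ))
    -- Cˡ coincides with C on all rows within the layer: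
    (hcompat : ∀ j : Fin nz, (a : ℕ) ≤ (j : ℕ) → (j : ℕ) ≤ (b : ℕ) → ∀ k, Cl j k = C j k)
    -- unique solvability of the local system:
    (hinj : ∀ w₁ w₂ : Fin nz → Fin nx → ℂ,
      (∀ j, ∑ k, Cl j k *ᵥ w₁ k = ∑ k, Cl j k *ᵥ w₂ k) → w₁ = w₂)
    (w : Fin nz → Fin nx → ℂ)
    (hw : ∀ j : Fin nz, ∑ k, Cl j k *ᵥ w k
        = (if (a : ℕ) ≤ (j : ℕ) ∧ (j : ℕ) ≤ (b : ℕ) then g j else 0)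
          + (if j = b then -(Cl b ⟨(b : ℕ) + 1, hb⟩ *ᵥ v ⟨(b : ℕ) + 1, hb⟩) else 0)
          + (if j = (⟨(b : ℕ) + 1, hb⟩ : Fin nz) then Cl ⟨(b : ℕ) + 1, hb⟩ b *ᵥ v b else 0)
          + (if j = a then
              -(Cl a ⟨(a : ℕ) - 1, by omega⟩ *ᵥ v ⟨(a : ℕ) - 1, by omega⟩) else 0)
          + (if j = (⟨(a : ℕ) - 1, by omega⟩ : Fin nz) then
              Cl ⟨(a : ℕ) - 1, by omega⟩ a *ᵥ v a else 0)) :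
    ∀ j : Fin nz, (a : ℕ) ≤ (j : ℕ) → (j : ℕ) ≤ (b : ℕ) → w j = v j := by
  have hlocal := layer_restriction_solves_local_system htriC htriCl hv
    (a' := ⟨(a : ℕ) - 1, by omega⟩) (b' := ⟨(b : ℕ) + 1, hb⟩) (by simp only; omega) rfl hab
    hcompat
  have hw_eq : w = (Set.Icc a b).indicator v := hinj _ _ fun j => by
    simp only [hw j, hlocal j, Finset.mem_Icc, Fin.le_iff_val_le_val]
  intro j hja hjb
  rw [hw_eq, Set.indicator_of_mem (show j ∈ Set.Icc a b from ⟨hja, hjb⟩)]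
end

section
/- Multiplicative (Gauss-Seidel) domain-decomposition sweep exactness: suppose the domain indices {1,...,n_z} are partitioned into L contiguous layers, C is block tridiagonal and each exact local matrix C^ℓ (the restriction of C to layer ℓ with exact transmission data) is invertible. If in the downward sweep of Algorithm 1 the transmitted traces w^{ℓ-1}_0, w^{ℓ-1}_1 used in layer ℓ equal the corresponding traces of the true solution v of Cv = g, then the local solve in layer ℓ reproduces the true solution restricted to that layer. -/
/-!
The truncation of `v` to the layer solves the local system. On the rows of the layer `Cˡ`
agrees with `C`, and since `Cˡ` is block tridiagonal, cutting `v` off after block `b` only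
removes the coupling `Cˡ_{b,b+1} v_{b+1}` from row `b` and leaves the single term
`Cˡ_{b+1,b} v_b` in row `b + 1`: these are exactly the transmitted source terms. Injectivity
of `Cˡ` then identifies the local solution with the truncation.
-/

open scoped BigOperators Matrix

def IsBlockTridiagonal {n : ℕ} {α : Type*} [Zero α] (A : Fin n → Fin n → α) : Prop :=
  ∀ j k : Fin n, 1 < ((j : ℤ) - (k : ℤ)).natAbs → A j k = 0

namespace IsBlockTridiagonal

variable {n : ℕ} {m R : Type*} [Fintype m] [Ring R] {A : Fin n → Fin n → Matrix m m R}

lemma sum_mulVec_ite_lt_of_le (hA : IsBlockTridiagonal A)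
    (x : Fin n → m → R) {b j : Fin n} (hb : (b : ℕ) + 1 < n) (hj : (j : ℕ) ≤ b) :
    ∑ k : Fin n, (if (b : ℕ) < (k : ℕ) then A j k *ᵥ x k else 0)
      = if j = b then A b ⟨b + 1, hb⟩ *ᵥ x ⟨b + 1, hb⟩ else 0 := by
  rw [Finset.sum_eq_single_of_mem ⟨b + 1, hb⟩ (Finset.mem_univ _)]
  · rw [if_pos (Nat.lt_succ_self _)]
    split_ifs with hjb
    · rw [hjb]
    · have hjb := Fin.val_ne_of_ne hjb
      rw [hA _ _ (by simp only [Nat.cast_add]; omega), Matrix.zero_mulVec]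
  · intro k _ hk
    have hk : (k : ℕ) ≠ b + 1 := fun h => hk (Fin.ext h)
    split_ifs with hbk
    · rw [hA _ _ (by omega), Matrix.zero_mulVec]
    · rfl

lemma sum_mulVec_ite_le_of_lt (hA : IsBlockTridiagonal A)
    (x : Fin n → m → R) {b j : Fin n} (hb : (b : ℕ) + 1 < n) (hj : (b : ℕ) < j) :
    ∑ k : Fin n, (if (k : ℕ) ≤ (b : ℕ) then A j k *ᵥ x k else 0)
      = if j = ⟨b + 1, hb⟩ then A ⟨b + 1, hb⟩ b *ᵥ x b else 0 := by
  rw [Finset.sum_eq_single_of_mem b (Finset.mem_univ _)]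
  · rw [if_pos le_rfl]
    split_ifs with hjb
    · rw [hjb]
    · have hjb : (j : ℕ) ≠ b + 1 := fun h => hjb (Fin.ext h)
      rw [hA _ _ (by omega), Matrix.zero_mulVec]
  · intro k _ hk
    have hk := Fin.val_ne_of_ne hk
    split_ifs with hkb
    · rw [hA _ _ (by omega), Matrix.zero_mulVec]
    · rfl

lemma sum_mulVec_truncate (hA : IsBlockTridiagonal A)
    (x : Fin n → m → R) {b : Fin n} (hb : (b : ℕ) + 1 < n) (j : Fin n) :
    ∑ k, A j k *ᵥ (if (k : ℕ) ≤ (b : ℕ) then x k else 0)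
      = (if (j : ℕ) ≤ (b : ℕ) then ∑ k, A j k *ᵥ x k else 0)
        + (if j = b then -(A b ⟨b + 1, hb⟩ *ᵥ x ⟨b + 1, hb⟩) else 0)
        + (if j = ⟨b + 1, hb⟩ then A ⟨b + 1, hb⟩ b *ᵥ x b else 0) := by
  have hpush : ∀ k, A j k *ᵥ (if (k : ℕ) ≤ (b : ℕ) then x k else 0)
      = if (k : ℕ) ≤ (b : ℕ) then A j k *ᵥ x k else 0 := fun k => by
    split_ifs <;> simp
  rw [Finset.sum_congr rfl fun k _ => hpush k]
  by_cases hj : (j : ℕ) ≤ b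
  · have hsplit : ∑ k, A j k *ᵥ x k
        = ∑ k : Fin n, (if (k : ℕ) ≤ (b : ℕ) then A j k *ᵥ x k else 0)
        + ∑ k : Fin n, (if (b : ℕ) < (k : ℕ) then A j k *ᵥ x k else 0) := by
      rw [← Finset.sum_add_distrib]
      refine Finset.sum_congr rfl fun k _ => ?_
      split_ifs <;> first | omega | simp
    have hjb : j ≠ ⟨b + 1, hb⟩ := fun h => by simp [h] at hj
    rw [if_pos hj, if_neg hjb, hsplit, hA.sum_mulVec_ite_lt_of_le x hb hj]
    split_ifs <;> abel
  · have hjb : j ≠ b := fun h => hj (h ▸ le_rfl)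
    rw [hA.sum_mulVec_ite_le_of_lt x hb (not_le.mp hj), if_neg hj, if_neg hjb, zero_add, zero_add]

end IsBlockTridiagonal

theorem gauss_seidel_sweep_exact_with_exact_traces_general
    (nx nz : ℕ)
    (C Cl : Fin nz → Fin nz → Matrix (Fin nx) (Fin nx) ℂ)
    (htriCl : ∀ j k : Fin nz, 1 < ((j : ℤ) - (k : ℤ)).natAbs → Cl j k = 0)
    (v g : Fin nz → Fin nx → ℂ)
    (hv : ∀ j, ∑ k, C j k *ᵥ v k = g j)
    (b : Fin nz) (hb : (b : ℕ) + 1 < nz)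
    -- compatibility: Cˡ coincides with C on all rows of the layer {j ≤ b}:
    (hcompat : ∀ j : Fin nz, (j : ℕ) ≤ (b : ℕ) → ∀ k, Cl j k = C j k)
    -- unique solvability of the local system:
    (hinj : ∀ w₁ w₂ : Fin nz → Fin nx → ℂ,
      (∀ j, ∑ k, Cl j k *ᵥ w₁ k = ∑ k, Cl j k *ᵥ w₂ k) → w₁ = w₂)
    -- exact transmitted traces:
    (trace₁ trace₀ : Fin nx → ℂ)
    (htrace₁ : trace₁ = v ⟨(b : ℕ) + 1, hb⟩) (htrace₀ : trace₀ = v b)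
    -- the local solve of the downward sweep of Algorithm 1:
    (w : Fin nz → Fin nx → ℂ)
    (hw : ∀ j : Fin nz, ∑ k, Cl j k *ᵥ w k
        = (if (j : ℕ) ≤ (b : ℕ) then g j else 0)
          + (if j = b then -(Cl b ⟨(b : ℕ) + 1, hb⟩ *ᵥ trace₁) else 0)
          + (if j = (⟨(b : ℕ) + 1, hb⟩ : Fin nz) then Cl ⟨(b : ℕ) + 1, hb⟩ b *ᵥ trace₀
             else 0)) :
    ∀ j : Fin nz, (j : ℕ) ≤ (b : ℕ) → w j = v j := by
  have htruncate : (fun k : Fin nz => if (k : ℕ) ≤ (b : ℕ) then v k else 0) = w := by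
    refine hinj _ _ fun j => ?_
    rw [IsBlockTridiagonal.sum_mulVec_truncate htriCl v hb, hw j, htrace₁, htrace₀]
    congr 2
    split_ifs with hj
    · rw [← hv j]
      exact Finset.sum_congr rfl fun k _ => by rw [hcompat j hj k]
    · rfl
  intro j hj
  exact (congrFun htruncate j).symm.trans (if_pos hj)

/-- exactness of the Gauss–Seidel downward sweep with exact transmitted
traces: let `C` be block tridiagonal with true solution `C v = g`, and consider a layer
consisting of the blocks `j ≤ b` (the layer reached by the downward sweep), with local
matrix `Cˡ` block tridiagonal, coinciding with `C` on all rows of the layer (compatibility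
condition) and injective (invertible).  If the transmitted traces used in the sweep,
`w^{ℓ-1}_1` and `w^{ℓ-1}_0`, equal the corresponding traces `v_{b+1}` and `v_b` of the true
solution, then the local solve of Algorithm 1, with right-hand side
`χ_layer g - δ_b Cˡ_{b,b+1} w^{ℓ-1}_1 + δ_{b+1} Cˡ_{b+1,b} w^{ℓ-1}_0`,
reproduces the true solution restricted to the layer. -/
theorem gauss_seidel_sweep_exact_with_exact_traces
    (nx nz : ℕ)
    (C Cl : Fin nz → Fin nz → Matrix (Fin nx) (Fin nx) ℂ)
    (htriC : ∀ j k : Fin nz, 1 < ((j : ℤ) - (k : ℤ)).natAbs → C j k = 0)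
    (htriCl : ∀ j k : Fin nz, 1 < ((j : ℤ) - (k : ℤ)).natAbs → Cl j k = 0)
    (v g : Fin nz → Fin nx → ℂ)
    (hv : ∀ j, ∑ k, C j k *ᵥ v k = g j)
    (b : Fin nz) (hb : (b : ℕ) + 1 < nz)
    -- compatibility: Cˡ coincides with C on all rows of the layer {j ≤ b}:
    (hcompat : ∀ j : Fin nz, (j : ℕ) ≤ (b : ℕ) → ∀ k, Cl j k = C j k)
    -- unique solvability of the local system:
    (hinj : ∀ w₁ w₂ : Fin nz → Fin nx → ℂ,
      (∀ j, ∑ k, Cl j k *ᵥ w₁ k = ∑ k, Cl j k *ᵥ w₂ k) → w₁ = w₂)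
    -- exact transmitted traces:
    (trace₁ trace₀ : Fin nx → ℂ)
    (htrace₁ : trace₁ = v ⟨(b : ℕ) + 1, hb⟩) (htrace₀ : trace₀ = v b)
    -- the local solve of the downward sweep of Algorithm 1:
    (w : Fin nz → Fin nx → ℂ)
    (hw : ∀ j : Fin nz, ∑ k, Cl j k *ᵥ w k
        = (if (j : ℕ) ≤ (b : ℕ) then g j else 0)
          + (if j = b then -(Cl b ⟨(b : ℕ) + 1, hb⟩ *ᵥ trace₁) else 0)
          + (if j = (⟨(b : ℕ) + 1, hb⟩ : Fin nz) then Cl ⟨(b : ℕ) + 1, hb⟩ b *ᵥ trace₀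
             else 0)) :
    ∀ j : Fin nz, (j : ℕ) ≤ (b : ℕ) → w j = v j :=
  gauss_seidel_sweep_exact_with_exact_traces_general nx nz C Cl htriCl v g hv b hb hcompat hinj
    trace₁ trace₀ htrace₁ htrace₀ w hw
end
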